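/- Let r, s be rational numbers with 0 ≤ s ≤ r, let k ≤ n be natural numbers, and let p : ℕ → ℚ be nonnegative. Then (r − s) * S(n+1, 2) + Σ_{i=1}^{k} (p_i + s) * C(n, i) ≤ r * S(n+1, 2) + Σ_{i=1}^{k} p_i * C(n, i). -/
import Mathlib


/-- Stirling numbers of the second kind. -/
def stirling : ℕ → ℕ → ℕ
  | 0, 0 => 1
  | 0, _ + 1 => 0
  | _ + 1, 0 => 0
  | n + 1, k + 1 => (k + 1) * stirling n (k + 1) + stirling n k

lemma stirling_one (n : ℕ) : stirling (n + 1) 1 = 1 := by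
  induction n with
  | zero => rfl
  | succ m ih =>
    show 1 * stirling (m + 1) 1 + stirling (m + 1) 0 = 1
    rw [ih]; rfl

lemma stirling_two (n : ℕ) : stirling (n + 1) 2 = 2 ^ n - 1 := by
  induction n with
  | zero => rfl
  | succ m ih =>
    show 2 * stirling (m + 1) 2 + stirling (m + 1) 1 = _
    rw [ih, stirling_one]
    have : 1 ≤ 2 ^ m := Nat.one_le_two_pow
    have : 2 ^ (m + 1) = 2 * 2 ^ m := by ring
    omega

lemma sum_choose_le (k n : ℕ) (hkn : k ≤ n) :
    (∑ i ∈ Finset.Icc 1 k, n.choose i) + 1 ≤ 2 ^ n := by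
  have h1 : ∑ i ∈ Finset.Icc 1 k, n.choose i ≤ ∑ i ∈ Finset.Icc 1 n, n.choose i :=
    Finset.sum_le_sum_of_subset (Finset.Icc_subset_Icc_right hkn)
  have h2 : ∑ i ∈ Finset.Icc 0 n, n.choose i = 2 ^ n := by
    rw [← Nat.sum_range_choose n]
    congr 1
    rw [Finset.range_eq_Ico, Finset.Ico_add_one_right_eq_Icc]
  have h3 : ∑ i ∈ Finset.Icc 0 n, n.choose i
      = n.choose 0 + ∑ i ∈ Finset.Icc 1 n, n.choose i := by
    rw [show Finset.Icc 0 n = insert 0 (Finset.Icc 1 n) by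
          ext x; simp; omega,
        Finset.sum_insert (by simp)]
  have h4 : n.choose 0 = 1 := Nat.choose_zero_right n
  omega

theorem demotion_inequality (r s : ℚ) (hs : 0 ≤ s) (hsr : s ≤ r)
    (k n : ℕ) (hkn : k ≤ n) (p : ℕ → ℚ) (hp : ∀ i, 0 ≤ p i) :
    (r - s) * stirling (n + 1) 2 + ∑ i ∈ Finset.Icc 1 k, (p i + s) * n.choose i ≤
      r * stirling (n + 1) 2 + ∑ i ∈ Finset.Icc 1 k, p i * n.choose i := by
  have key : (∑ i ∈ Finset.Icc 1 k, (n.choose i : ℚ)) ≤ stirling (n + 1) 2 := by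
    have h := sum_choose_le k n hkn
    rw [stirling_two, Nat.cast_sub Nat.one_le_two_pow]
    have : ((∑ i ∈ Finset.Icc 1 k, n.choose i : ℕ) : ℚ) + 1 ≤ ((2 ^ n : ℕ) : ℚ) := by
      exact_mod_cast h
    push_cast at this ⊢
    linarith
  have expand : ∑ i ∈ Finset.Icc 1 k, (p i + s) * n.choose i
      = (∑ i ∈ Finset.Icc 1 k, p i * n.choose i) + s * ∑ i ∈ Finset.Icc 1 k, (n.choose i : ℚ) := by
    rw [Finset.mul_sum, ← Finset.sum_add_distrib]
    congr 1; ext i; ring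
  rw [expand]
  have h2 : s * (∑ i ∈ Finset.Icc 1 k, (n.choose i : ℚ)) ≤ s * stirling (n + 1) 2 :=
    mul_le_mul_of_nonneg_left key hs
  nlinarith [h2]
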